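/- arXiv:2112.14493 — 3 statements merged into one kernel-verified Lean document; each statement's English description precedes it below -/
import Mathlib

section
/- Let Δ be a simplicial complex on vertex set [m] over a field k, and let Θ = (θ_1,…,θ_d) be a sequence of linear forms in k[x_1,…,x_m] with d = dim Δ + 1. If for every face σ ∈ Δ the images r_σ(θ_1),…,r_σ(θ_d) under the restriction map r_σ : k[Δ] → k[x_i : i ∈ σ] generate the polynomial algebra k[x_i : i ∈ σ], then the quotient k[Δ]/(Θ) is a finite-dimensional k-vector space. -/
open MvPolynomial

/-- The Stanley–Reisner ideal of a simplicial complex `Δ` on vertex set `V`. -/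
noncomputable def SRIdeal (k : Type*) [CommRing k] {V : Type*} [DecidableEq V]
    (Δ : Set (Finset V)) : Ideal (MvPolynomial V k) :=
  Ideal.span {p | ∃ s : Finset V, s ∉ Δ ∧ p = ∏ v ∈ s, X v}

namespace LsopAux

variable {k : Type*} [Field k] {m : ℕ}

lemma exists_single_of_degree_one {u : Fin m →₀ ℕ} (h : u.degree = 1) :
    ∃ a, u = Finsupp.single a 1 := by
  have hne : u ≠ 0 := by
    rintro rfl
    simp [map_zero] at h
  obtain ⟨a, ha⟩ := Finsupp.support_nonempty_iff.mpr hne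
  refine ⟨a, ?_⟩
  have h1 : 1 ≤ u a := Nat.one_le_iff_ne_zero.mpr (Finsupp.mem_support_iff.mp ha)
  have hua : u a = 1 := le_antisymm (h ▸ Finsupp.le_degree a u) h1
  ext b
  by_cases hb : b = a
  · subst hb; simp [hua]
  · rw [Finsupp.single_eq_of_ne' (Ne.symm hb)]
    by_contra hub
    have hub1 : 1 ≤ u b := Nat.one_le_iff_ne_zero.mpr hub
    have hsub : ({a, b} : Finset (Fin m)) ⊆ u.support := by
      intro x hx
      simp only [Finset.mem_insert, Finset.mem_singleton] at hx
      rcases hx with rfl | rfl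
      · exact ha
      · exact Finsupp.mem_support_iff.mpr hub
    have hle : u a + u b ≤ u.degree := by
      calc u a + u b = ∑ i ∈ ({a, b} : Finset (Fin m)), u i := by
            rw [Finset.sum_pair (Ne.symm hb)]
        _ ≤ ∑ i ∈ u.support, u i := Finset.sum_le_sum_of_subset hsub
        _ = u.degree := rfl
    omega

lemma degree_single_one (a : Fin m) : (Finsupp.single a 1 : Fin m →₀ ℕ).degree = 1 := by
  rw [Finsupp.degree_apply, Finsupp.support_single_ne_zero _ one_ne_zero, Finset.sum_singleton,
    Finsupp.single_eq_same]

lemma eq_sum_of_isHomogeneous_one {p : MvPolynomial (Fin m) k} (hp : p.IsHomogeneous 1) :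
    p = ∑ l : Fin m, C (coeff (Finsupp.single l 1) p) * X l := by
  ext u
  rw [coeff_sum]
  by_cases hu : u.degree = 1
  · obtain ⟨a, rfl⟩ := exists_single_of_degree_one hu
    rw [Finset.sum_eq_single a]
    · rw [coeff_C_mul, coeff_X', if_pos rfl, mul_one]
    · intro b _ hba
      rw [coeff_C_mul, coeff_X', if_neg, mul_zero]
      intro hsingle
      exact hba (by simpa using (Finsupp.single_left_injective one_ne_zero) hsingle)
    · intro h; exact absurd (Finset.mem_univ a) h
  · rw [hp.coeff_eq_zero hu]
    symm
    apply Finset.sum_eq_zero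
    intro l _
    rw [coeff_C_mul, coeff_X', if_neg, mul_zero]
    intro hsingle
    exact hu (hsingle ▸ degree_single_one l)

lemma eq_C_of_isHomogeneous_zero {p : MvPolynomial (Fin m) k} (hp : p.IsHomogeneous 0) :
    p = C (coeff 0 p) := by
  ext u
  by_cases hu : u = 0
  · subst hu; simp
  · rw [hp.coeff_eq_zero (by rwa [ne_eq, Finsupp.degree_eq_zero_iff]), coeff_C,
      if_neg (fun h => hu h.symm)]

lemma sub_aeval_mem (S : Finset (Fin m)) (p : MvPolynomial (Fin m) k) :
    p - aeval (fun j => if j ∈ S then (X j : MvPolynomial (Fin m) k) else 0) p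
      ∈ Ideal.span ((fun l => (X l : MvPolynomial (Fin m) k)) '' {l | l ∉ S}) := by
  set φ : Fin m → MvPolynomial (Fin m) k := fun j => if j ∈ S then X j else 0 with hφ
  set J := Ideal.span ((fun l => (X l : MvPolynomial (Fin m) k)) '' {l | l ∉ S}) with hJ
  induction p using MvPolynomial.induction_on with
  | C a => simp only [aeval_C, algebraMap_eq, sub_self]; exact J.zero_mem
  | add p q hp hq =>
      rw [map_add]
      have : p + q - (aeval φ p + aeval φ q) = (p - aeval φ p) + (q - aeval φ q) := by ring
      rw [this]; exact J.add_mem hp hq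
  | mul_X p j hp =>
      rw [map_mul, aeval_X]
      have : p * X j - aeval φ p * φ j
          = (p - aeval φ p) * X j + aeval φ p * (X j - φ j) := by ring
      rw [this]
      refine J.add_mem (J.mul_mem_right _ hp) ?_
      by_cases hj : j ∈ S
      · simp only [φ, if_pos hj, sub_self, mul_zero]; exact J.zero_mem
      · have hXj : X j - φ j = X j := by simp [φ, hj]
        rw [hXj]
        exact J.mul_mem_left _ (Ideal.subset_span ⟨j, hj, rfl⟩)

lemma mem_span_of_adjoin {d : ℕ} (L : Fin d → MvPolynomial (Fin m) k)
    (hL : ∀ i, (L i).IsHomogeneous 1) {p : MvPolynomial (Fin m) k}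
    (hp : p.IsHomogeneous 1) (hmem : p ∈ Algebra.adjoin k (Set.range L)) :
    p ∈ Submodule.span k (Set.range L) := by
  have hcomp : ∀ x : MvPolynomial (Fin m) k, ∀ n, x.IsHomogeneous n →
      homogeneousComponent 1 x = if 1 = n then x else 0 := by
    intro x n hx
    exact homogeneousComponent_of_mem ((mem_homogeneousSubmodule _ _).mpr hx)
  have h1 : p ∈ Subalgebra.toSubmodule (Algebra.adjoin k (Set.range L)) := hmem
  rw [Algebra.adjoin_eq_span] at h1
  have h2 := Submodule.mem_map_of_mem
    (f := (homogeneousComponent 1 : MvPolynomial (Fin m) k →ₗ[k] MvPolynomial (Fin m) k)) h1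
  rw [Submodule.map_span] at h2
  have hself : homogeneousComponent 1 p = p := by rw [hcomp p 1 hp, if_pos rfl]
  rw [hself] at h2
  refine Submodule.span_le.mpr ?_ h2
  rintro _ ⟨x, hx, rfl⟩
  have key : ∀ (x : MvPolynomial (Fin m) k), x ∈ Submonoid.closure (Set.range L) →
      (∃ n, x.IsHomogeneous n) ∧
        homogeneousComponent 1 x ∈ Submodule.span k (Set.range L) := by
    intro x hx
    induction hx using Submonoid.closure_induction with
    | mem y hy =>
        obtain ⟨i, rfl⟩ := hy
        refine ⟨⟨1, hL i⟩, ?_⟩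
        rw [hcomp _ 1 (hL i), if_pos rfl]
        exact Submodule.subset_span ⟨i, rfl⟩
    | one =>
        refine ⟨⟨0, isHomogeneous_one _ _⟩, ?_⟩
        rw [hcomp _ 0 (isHomogeneous_one _ _), if_neg one_ne_zero]
        exact Submodule.zero_mem _
    | mul y z hy hz hhy hhz =>
        obtain ⟨⟨a, hya⟩, hys⟩ := hhy
        obtain ⟨⟨b, hzb⟩, hzs⟩ := hhz
        refine ⟨⟨a + b, hya.mul hzb⟩, ?_⟩
        match a, b with
        | 0, b =>
            have hyC : y = C (coeff 0 y) := eq_C_of_isHomogeneous_zero hya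
            rw [hyC, homogeneousComponent_C_mul, ← smul_eq_C_mul]
            exact Submodule.smul_mem _ _ hzs
        | a + 1, 0 =>
            have hzC : z = C (coeff 0 z) := eq_C_of_isHomogeneous_zero hzb
            rw [hzC, mul_comm, homogeneousComponent_C_mul, ← smul_eq_C_mul]
            exact Submodule.smul_mem _ _ hys
        | a + 1, b + 1 =>
            rw [hcomp _ _ (hya.mul hzb), if_neg (by omega)]
            exact Submodule.zero_mem _
  exact (key x hx).2

end LsopAux

open LsopAux in
/-- If `Θ = (θ₁,…,θ_d)` is a sequence of linear forms (`d = dim Δ + 1`) whose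
restriction to each face `σ ∈ Δ` generates the polynomial algebra `k[xᵢ : i ∈ σ]`,
then the Artinian reduction `k[Δ]/(Θ)` is a finite-dimensional `k`-vector space. -/
theorem lsop_finite_dimensional {k : Type*} [Field k] {m d : ℕ}
    (Δ : Set (Finset (Fin m)))
    (hdown : ∀ s ∈ Δ, ∀ t ⊆ s, t ∈ Δ) (hne : ∅ ∈ Δ)
    (hdim : ∀ s ∈ Δ, s.card ≤ d) (hdim' : ∃ s ∈ Δ, s.card = d)
    (θ : Fin d → MvPolynomial (Fin m) k) (hθ : ∀ i, (θ i).IsHomogeneous 1)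
    (hgen : ∀ σ ∈ Δ,
      Algebra.adjoin k
          (Set.range fun i => aeval (fun j => if j ∈ σ then (X j : MvPolynomial (Fin m) k) else 0) (θ i)) =
        Algebra.adjoin k {p : MvPolynomial (Fin m) k | ∃ j ∈ σ, p = X j}) :
    Module.Finite k
      (MvPolynomial (Fin m) k ⧸ (SRIdeal k Δ ⊔ Ideal.span (Set.range θ))) := by
  set I : Ideal (MvPolynomial (Fin m) k) := SRIdeal k Δ ⊔ Ideal.span (Set.range θ) with hIdef
  -- main radical claim
  have main : ∀ n (S : Finset (Fin m)), m - S.card = n → S.Nonempty →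
      (∏ v ∈ S, X v : MvPolynomial (Fin m) k) ∈ I.radical := by
    intro n
    induction n using Nat.strong_induction_on with
    | _ n ih =>
      intro S hcard hSne
      by_cases hSΔ : S ∈ Δ
      · obtain ⟨j, hj⟩ := hSne
        set φ : Fin m → MvPolynomial (Fin m) k := fun l => if l ∈ S then X l else 0 with hφdef
        set L : Fin d → MvPolynomial (Fin m) k := fun i => aeval φ (θ i) with hLdef
        have hL : ∀ i, (L i).IsHomogeneous 1 := by
          intro i
          have hrep := eq_sum_of_isHomogeneous_one (hθ i)
          have : L i = ∑ l : Fin m, C (coeff (Finsupp.single l 1) (θ i)) * φ l := by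
            show aeval φ (θ i) = _
            conv_lhs => rw [hrep]
            rw [map_sum]
            refine Finset.sum_congr rfl fun l _ => ?_
            rw [map_mul, aeval_C, aeval_X, algebraMap_eq]
          rw [this]
          refine IsHomogeneous.sum _ _ _ fun l _ => ?_
          by_cases hl : l ∈ S
          · simp only [φ, if_pos hl]
            simpa using (isHomogeneous_C _ _).mul (isHomogeneous_X _ l)
          · simp only [φ, if_neg hl, mul_zero]
            exact isHomogeneous_zero _ _ _
        have hXj : (X j : MvPolynomial (Fin m) k) ∈ Submodule.span k (Set.range L) := by
          refine mem_span_of_adjoin L hL (isHomogeneous_X _ j) ?_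
          show (X j : MvPolynomial (Fin m) k) ∈ Algebra.adjoin k
            (Set.range fun i => aeval (fun l => if l ∈ S then (X l : MvPolynomial (Fin m) k) else 0) (θ i))
          rw [hgen S hSΔ]
          exact Algebra.subset_adjoin ⟨j, hj, rfl⟩
        obtain ⟨a, ha⟩ := (Submodule.mem_span_range_iff_exists_fun k).mp hXj
        set J : Ideal (MvPolynomial (Fin m) k) :=
          Ideal.span ((fun l => (X l : MvPolynomial (Fin m) k)) '' {l | l ∉ S}) with hJdef
        have hq : (X j : MvPolynomial (Fin m) k) - ∑ i, a i • θ i ∈ J := by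
          rw [← ha, ← Finset.sum_sub_distrib]
          refine Submodule.sum_mem _ fun i _ => ?_
          rw [← smul_sub, smul_eq_C_mul]
          refine J.mul_mem_left _ ?_
          have := sub_aeval_mem S (θ i)
          have hneg : L i - θ i = -(θ i - aeval φ (θ i)) := by rw [hLdef]; ring
          rw [hneg]
          exact J.neg_mem this
        have hJrad : ∀ q ∈ J, (∏ v ∈ S, X v : MvPolynomial (Fin m) k) * q ∈ I.radical := by
          intro q hq
          induction hq using Submodule.span_induction with
          | mem x hx =>
              obtain ⟨l, hl, rfl⟩ := hx
              have hins : (∏ v ∈ S, X v : MvPolynomial (Fin m) k) * X l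
                  = ∏ v ∈ insert l S, X v := by
                rw [Finset.prod_insert hl, mul_comm]
              rw [hins]
              have hcardS : S.card < m := by
                have h1 : S ≠ Finset.univ := fun h => hl (h ▸ Finset.mem_univ l)
                have h2 := (Finset.card_lt_iff_ne_univ S).mpr h1
                simpa using h2
              have hlt : m - (insert l S).card < n := by
                rw [Finset.card_insert_of_notMem hl]
                omega
              exact ih _ hlt _ rfl ⟨l, Finset.mem_insert_self l S⟩
          | zero => rw [mul_zero]; exact Submodule.zero_mem _
          | add x y hx hy hhx hhy => rw [mul_add]; exact Submodule.add_mem _ hhx hhy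
          | smul c x hx hhx =>
              rw [smul_eq_mul]
              have hrw : (∏ v ∈ S, X v : MvPolynomial (Fin m) k) * (c * x)
                  = c * ((∏ v ∈ S, X v) * x) := by ring
              rw [hrw]
              exact Ideal.mul_mem_left _ _ hhx
        have hsq : (∏ v ∈ S, X v : MvPolynomial (Fin m) k) ^ 2 ∈ I.radical := by
          have hprod : (X j : MvPolynomial (Fin m) k) * ∏ v ∈ S.erase j, X v = ∏ v ∈ S, X v :=
            Finset.mul_prod_erase S _ hj
          have expand : (∏ v ∈ S, X v : MvPolynomial (Fin m) k) ^ 2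
              = (∑ i, a i • θ i) * ((∏ v ∈ S.erase j, X v) * (∏ v ∈ S, X v))
                + (∏ v ∈ S.erase j, X v) * ((∏ v ∈ S, X v) * (X j - ∑ i, a i • θ i)) := by
            rw [pow_two]
            nth_rewrite 1 [← hprod]
            ring
          rw [expand]
          refine Submodule.add_mem _ ?_ ?_
          · refine Ideal.le_radical (Ideal.mul_mem_right _ _ (Ideal.mem_sup_right ?_))
            exact Submodule.sum_mem _ fun i _ => by
              rw [smul_eq_C_mul]; exact Ideal.mul_mem_left _ _ (Ideal.subset_span ⟨i, rfl⟩)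
          · exact Ideal.mul_mem_left _ _ (hJrad _ hq)
        exact Ideal.mem_radical_of_pow_mem hsq
      · refine Ideal.le_radical ?_
        refine Ideal.mem_sup_left ?_
        exact Ideal.subset_span ⟨S, hSΔ, rfl⟩
  have hX : ∀ j : Fin m, ∃ nn : ℕ, (X j : MvPolynomial (Fin m) k) ^ nn ∈ I := by
    intro j
    have h1 := main (m - ({j} : Finset (Fin m)).card) {j} rfl (Finset.singleton_nonempty j)
    rw [Finset.prod_singleton] at h1
    exact Ideal.mem_radical_iff.mp h1
  have hint : ∀ x ∈ Set.range (fun j => Ideal.Quotient.mk I (X j : MvPolynomial (Fin m) k)),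
      IsIntegral k x := by
    rintro _ ⟨j, rfl⟩
    obtain ⟨nn, hn⟩ := hX j
    refine ⟨(Polynomial.X : Polynomial k) ^ (nn + 1), Polynomial.monic_X_pow _, ?_⟩
    show Polynomial.eval₂ (algebraMap k (MvPolynomial (Fin m) k ⧸ I))
        (Ideal.Quotient.mk I (X j : MvPolynomial (Fin m) k)) ((Polynomial.X : Polynomial k) ^ (nn + 1)) = 0
    rw [Polynomial.eval₂_X_pow, ← map_pow, Ideal.Quotient.eq_zero_iff_mem, pow_succ]
    exact Ideal.mul_mem_right _ _ hn
  have hadj : Algebra.adjoin k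
      (Set.range fun j => Ideal.Quotient.mk I (X j : MvPolynomial (Fin m) k)) = ⊤ := by
    have himg : (Set.range fun j => Ideal.Quotient.mk I (X j : MvPolynomial (Fin m) k))
        = (Ideal.Quotient.mkₐ k I) '' Set.range X := by
      rw [← Set.range_comp]; rfl
    rw [himg, ← AlgHom.map_adjoin, MvPolynomial.adjoin_range_X, Algebra.map_top]
    exact (AlgHom.range_eq_top _).mpr (Ideal.Quotient.mkₐ_surjective k I)
  have hfg := fg_adjoin_of_finite (Set.finite_range _) hint
  rw [hadj] at hfg
  refine ⟨?_⟩
  rwa [Algebra.top_toSubmodule] at hfg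
end

section
/- Let Δ be a simplicial complex over a field k and Θ an l.s.o.p. for k[Δ]. Then the Artinian reduction k(Δ;Θ) = k[Δ]/(Θ) is spanned as a k-vector space by the images of the square-free face monomials x_σ = Π_{i∈σ} x_i for σ ∈ Δ. -/
open MvPolynomial

set_option maxHeartbeats 1000000
set_option linter.unusedVariables false


lemma finsupp_sum_eq_one {α : Type*} {d : α →₀ ℕ} (h : (d.sum fun _ n => n) = 1) :
    ∃ v, d = Finsupp.single v 1 := by
  have hcard : d.support.card ≤ d.sum fun _ n => n := by
    rw [Finsupp.sum]
    calc d.support.card = ∑ _v ∈ d.support, 1 := by simp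
    _ ≤ ∑ v ∈ d.support, d v := Finset.sum_le_sum fun v hv =>
        Nat.one_le_iff_ne_zero.2 (Finsupp.mem_support_iff.1 hv)
  rw [h] at hcard
  interval_cases hc : d.support.card
  · refine absurd h ?_
    rw [Finset.card_eq_zero] at hc
    have : d = 0 := Finsupp.support_eq_empty.1 hc
    simp [this]
  · obtain ⟨v, hv⟩ := Finset.card_eq_one.1 hc
    refine ⟨v, (Finsupp.support_eq_singleton.1 hv).2.trans ?_⟩
    have hdv : d v ≠ 0 := (Finsupp.support_eq_singleton.1 hv).1
    have : d.sum (fun _ n => n) = d v := by rw [Finsupp.sum, hv, Finset.sum_singleton]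
    rw [h] at this
    rw [← this]

lemma hom1_decomp {k : Type*} [CommRing k] {m : ℕ} (p : MvPolynomial (Fin m) k)
    (hp : p.IsHomogeneous 1) :
    p = ∑ v : Fin m, C (coeff (Finsupp.single v 1) p) * X v := by
  apply MvPolynomial.ext
  intro d
  rw [MvPolynomial.coeff_sum]
  by_cases hd : ∃ v, d = Finsupp.single v 1
  · obtain ⟨v, rfl⟩ := hd
    rw [Finset.sum_eq_single v]
    · simp [coeff_C_mul, coeff_X']
    · intro w _ hw
      simp only [coeff_C_mul, coeff_X']
      rw [if_neg, mul_zero]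
      intro hcontra
      exact hw (by
        have := (Finsupp.single_left_injective (by norm_num : (1:ℕ) ≠ 0)) hcontra
        exact this.symm ▸ rfl)
    · simp
  · have h1 : coeff d p = 0 := by
      apply hp.coeff_eq_zero
      intro hcontra
      have : (d.sum fun _ n => n) = 1 := by
        rw [← hcontra]; rfl
      exact hd (finsupp_sum_eq_one this)
    rw [h1]
    symm
    apply Finset.sum_eq_zero
    intro v _
    simp only [coeff_C_mul, coeff_X']
    rw [if_neg, mul_zero]
    intro hcontra
    exact hd ⟨v, hcontra.symm⟩

lemma key_lemma {k : Type*} [Field k] {m d : ℕ} (Δ : Set (Finset (Fin m)))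
    (hdown : ∀ s ∈ Δ, ∀ t ⊆ s, t ∈ Δ)
    (θ : Fin d → MvPolynomial (Fin m) k) (hθ : ∀ i, (θ i).IsHomogeneous 1)
    (hlsop : Module.Finite k
      (MvPolynomial (Fin m) k ⧸ (SRIdeal k Δ ⊔ Ideal.span (Set.range θ))))
    {σ : Finset (Fin m)} (hσ : σ ∈ Δ) {i : Fin m} (hi : i ∈ σ) :
    ∃ g ∈ Ideal.span (Set.range θ), ∃ c : Fin m → k, (∀ j ∈ σ, c j = 0) ∧
      X i = g + ∑ j : Fin m, c j • X j := by
  classical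
  set J := SRIdeal k Δ ⊔ Ideal.span (Set.range θ) with hJ
  -- the restricted coefficient vectors
  set cv : Fin d → (↥σ → k) := fun l v => coeff (Finsupp.single (v : Fin m) 1) (θ l) with hcv
  have hmem : (Pi.single (⟨i, hi⟩ : ↥σ) (1:k)) ∈ Submodule.span k (Set.range cv) := by
    by_contra hnm
    obtain ⟨f, hf1, hf0⟩ := Submodule.exists_dual_map_eq_bot_of_notMem hnm inferInstance
    set p : Fin m → k := fun v => if h : v ∈ σ then f (Pi.single (⟨v, h⟩ : ↥σ) 1) else 0 with hp
    set ev : MvPolynomial (Fin m) k →ₐ[k] Polynomial k :=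
      aeval (fun v => Polynomial.C (p v) * Polynomial.X) with hev
    -- f vanishes on each cv l
    have hfcv : ∀ l, f (cv l) = 0 := by
      intro l
      have h1 : f (cv l) ∈ Submodule.map f (Submodule.span k (Set.range cv)) :=
        Submodule.mem_map_of_mem (Submodule.subset_span ⟨l, rfl⟩)
      rw [hf0] at h1
      exact (Submodule.mem_bot k).1 h1
    -- ev kills θ l
    have hevθ : ∀ l, ev (θ l) = 0 := by
      intro l
      rw [hev]
      conv_lhs => rw [hom1_decomp (θ l) (hθ l)]
      rw [map_sum]
      have : ∀ v : Fin m,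
          aeval (fun v => Polynomial.C (p v) * Polynomial.X)
            (C (coeff (Finsupp.single v 1) (θ l)) * X v)
          = Polynomial.C (coeff (Finsupp.single v 1) (θ l) * p v) * Polynomial.X := by
        intro v
        rw [map_mul, aeval_C, aeval_X, map_mul, Polynomial.algebraMap_eq]
        ring
      rw [Finset.sum_congr rfl fun v _ => this v, ← Finset.sum_mul, ← map_sum]
      have hz : ∑ v : Fin m, coeff (Finsupp.single v 1) (θ l) * p v = 0 := by
        rw [← Finset.sum_subset (Finset.subset_univ σ)
          (fun v _ hv => by simp [hp, dif_neg hv])]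
        rw [← Finset.sum_attach σ (fun v => coeff (Finsupp.single v 1) (θ l) * p v)]
        have : ∀ v : ↥σ, coeff (Finsupp.single (v:Fin m) 1) (θ l) * p v
            = (cv l v) * f (Pi.single v 1) := by
          intro v
          simp only [hp, hcv, dif_pos v.2]
        rw [Finset.sum_congr rfl fun v _ => this v]
        have hexp : (cv l) = ∑ v : ↥σ, (cv l v) • (Pi.single v 1 : ↥σ → k) := by
          funext w
          simp [Finset.sum_apply, Pi.single_apply]
        have := hfcv l
        rw [hexp, map_sum] at this
        simpa [map_smul, smul_eq_mul] using this
      rw [hz]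
      simp
    -- ev kills J
    have hevJ : ∀ a ∈ J, ev a = 0 := by
      intro a ha
      rw [hJ] at ha
      have hle : SRIdeal k Δ ⊔ Ideal.span (Set.range θ) ≤ RingHom.ker (ev : MvPolynomial (Fin m) k →+* Polynomial k) := by
        apply sup_le
        · rw [SRIdeal, Ideal.span_le]
          rintro q ⟨s, hs, rfl⟩
          have : ∃ j ∈ s, j ∉ σ := by
            by_contra hcon
            push_neg at hcon
            exact hs (hdown σ hσ s hcon)
          obtain ⟨j, hjs, hjσ⟩ := this
          have : ev (∏ v ∈ s, X v) = ∏ v ∈ s, (Polynomial.C (p v) * Polynomial.X) := by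
            rw [map_prod]; simp [hev]
          rw [SetLike.mem_coe, RingHom.mem_ker]
          show ev _ = 0
          rw [this]
          apply Finset.prod_eq_zero hjs
          simp [hp, dif_neg hjσ]
        · rw [Ideal.span_le]
          rintro q ⟨l, rfl⟩
          rw [SetLike.mem_coe, RingHom.mem_ker]
          exact hevθ l
      exact hle ha
    -- ev is surjective
    have hpi : p i ≠ 0 := by
      simp only [hp]
      rw [dif_pos hi]
      exact hf1
    have hsurj : Function.Surjective ev := by
      have hX : Polynomial.X ∈ ev.range := by
        have hcalc : ev (C (p i)⁻¹ * X i) = Polynomial.X := by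
          rw [hev, map_mul, aeval_C, aeval_X, Polynomial.algebraMap_eq, ← mul_assoc,
            ← Polynomial.C_mul, inv_mul_cancel₀ hpi, Polynomial.C_1, one_mul]
        exact ⟨C (p i)⁻¹ * X i, hcalc⟩
      have : ev.range = ⊤ := by
        rw [eq_top_iff, ← Polynomial.adjoin_X]
        exact Algebra.adjoin_le (Set.singleton_subset_iff.2 hX)
      exact fun y => by
        have : y ∈ ev.range := this ▸ Algebra.mem_top
        exact this
    -- contradiction
    have hfin : Module.Finite k (Polynomial k) := by
      have hls : Function.Surjective (Ideal.Quotient.liftₐ J ev hevJ) := by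
        intro y
        obtain ⟨x, hx⟩ := hsurj y
        exact ⟨Ideal.Quotient.mk J x, by
          rw [Ideal.Quotient.liftₐ_apply]; exact hx⟩
      exact Module.Finite.of_surjective (Ideal.Quotient.liftₐ J ev hevJ).toLinearMap hls
    exact Polynomial.not_finite hfin
  -- now extract coefficients
  rw [Submodule.mem_span_range_iff_exists_fun k] at hmem
  obtain ⟨w, hw⟩ := hmem
  refine ⟨∑ l, w l • θ l, Submodule.sum_mem _ (fun l _ => by
      rw [smul_eq_C_mul]
      exact Ideal.mul_mem_left _ _ (Ideal.subset_span (Set.mem_range_self l))),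
    fun j => (if j = i then 1 else 0) - ∑ l, w l * coeff (Finsupp.single j 1) (θ l),
    ?_, ?_⟩
  · intro j hj
    have := congrFun hw ⟨j, hj⟩
    simp only [Finset.sum_apply, Pi.smul_apply, smul_eq_mul, hcv] at this
    rw [Pi.single_apply] at this
    have heq : ((⟨j, hj⟩ : ↥σ) = ⟨i, hi⟩) ↔ (j = i) := by
      constructor
      · intro h; exact Subtype.ext_iff.1 h
      · intro h; exact Subtype.ext h
    rw [sub_eq_zero, this]
    by_cases hji : j = i
    · rw [if_pos hji, if_pos (heq.2 hji)]
    · rw [if_neg hji, if_neg (fun h => hji (heq.1 h))]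
  · -- X i = ∑ w l • θ l + ∑ c j • X j
    have hθexp : ∀ l, θ l = ∑ v : Fin m, C (coeff (Finsupp.single v 1) (θ l)) * X v :=
      fun l => hom1_decomp (θ l) (hθ l)
    have h2 : (∑ l, w l • θ l)
        = ∑ v : Fin m, (∑ l, w l * coeff (Finsupp.single v 1) (θ l)) • X v := by
      have hterm : ∀ l, w l • θ l
          = ∑ v : Fin m, (w l * coeff (Finsupp.single v 1) (θ l)) • X v := by
        intro l
        conv_lhs => rw [hθexp l]
        rw [Finset.smul_sum]
        refine Finset.sum_congr rfl fun v _ => ?_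
        rw [smul_eq_C_mul, smul_eq_C_mul, map_mul, mul_assoc]
      rw [Finset.sum_congr rfl fun l _ => hterm l, Finset.sum_comm]
      refine Finset.sum_congr rfl fun v _ => ?_
      rw [← Finset.sum_smul]
    rw [h2, ← Finset.sum_add_distrib]
    have h3 : ∀ v : Fin m,
        (∑ l, w l * coeff (Finsupp.single v 1) (θ l)) • (X v : MvPolynomial (Fin m) k)
          + ((if v = i then (1:k) else 0) - ∑ l, w l * coeff (Finsupp.single v 1) (θ l)) • X v
        = (if v = i then (1:k) else 0) • (X v : MvPolynomial (Fin m) k) := by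
      intro v
      rw [← add_smul]
      congr 1
      ring
    rw [Finset.sum_congr rfl fun v _ => h3 v]
    simp [ite_smul]


/-- If `Θ` is an l.s.o.p. for `k[Δ]` (i.e. the Artinian reduction `k(Δ;Θ) = k[Δ]/(Θ)`
has Krull dimension zero, equivalently is a finite-dimensional `k`-vector space), then
`k(Δ;Θ)` is spanned as a `k`-vector space by the images of the square-free face
monomials `x_σ = Π_{i∈σ} xᵢ`, `σ ∈ Δ`. -/
theorem artinian_reduction_spanned_by_face_monomials {k : Type*} [Field k] {m d : ℕ}
    (Δ : Set (Finset (Fin m)))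
    (hdown : ∀ s ∈ Δ, ∀ t ⊆ s, t ∈ Δ) (hne : ∅ ∈ Δ)
    (hdim : ∀ s ∈ Δ, s.card ≤ d) (hdim' : ∃ s ∈ Δ, s.card = d)
    (θ : Fin d → MvPolynomial (Fin m) k) (hθ : ∀ i, (θ i).IsHomogeneous 1)
    (hlsop : Module.Finite k
      (MvPolynomial (Fin m) k ⧸ (SRIdeal k Δ ⊔ Ideal.span (Set.range θ)))) :
    Submodule.span k
        {q : MvPolynomial (Fin m) k ⧸ (SRIdeal k Δ ⊔ Ideal.span (Set.range θ)) |
          ∃ σ ∈ Δ, q = Ideal.Quotient.mk _ (∏ i ∈ σ, X i)} = ⊤ := by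
  classical
  set J := SRIdeal k Δ ⊔ Ideal.span (Set.range θ) with hJ
  set S := Submodule.span k
      {q : MvPolynomial (Fin m) k ⧸ J | ∃ σ ∈ Δ, q = Ideal.Quotient.mk _ (∏ i ∈ σ, X i)}
    with hS
  have hmkadd : ∀ x y : MvPolynomial (Fin m) k,
      Ideal.Quotient.mk J (x + y) = Ideal.Quotient.mk J x + Ideal.Quotient.mk J y :=
    fun x y => RingHom.map_add _ x y
  have hmksmul : ∀ (c : k) (x : MvPolynomial (Fin m) k),
      Ideal.Quotient.mk J (c • x) = c • Ideal.Quotient.mk J x :=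
    fun c x => map_smul (Ideal.Quotient.mkₐ k J) c x
  have hmksum : ∀ {ι : Type} (s : Finset ι) (g : ι → MvPolynomial (Fin m) k),
      Ideal.Quotient.mk J (∑ x ∈ s, g x) = ∑ x ∈ s, Ideal.Quotient.mk J (g x) :=
    fun s g => map_sum (Ideal.Quotient.mk J) g s
  -- main claim: every monomial maps into S
  have main : ∀ t : ℕ, ∀ a : Fin m →₀ ℕ,
      (a.sum fun _ n => n) - a.support.card = t →
      Ideal.Quotient.mk J (monomial a 1) ∈ S := by
    intro t
    induction t using Nat.strong_induction_on with
    | _ t ih =>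
      intro a ha
      by_cases hface : a.support ∈ Δ
      · by_cases hsf : ∀ v, a v ≤ 1
        · -- squarefree: it is a face monomial
          have hmon : (monomial a 1 : MvPolynomial (Fin m) k) = ∏ v ∈ a.support, X v := by
            rw [monomial_eq, C_1, one_mul, Finsupp.prod]
            refine Finset.prod_congr rfl fun v hv => ?_
            have h1 : a v = 1 :=
              le_antisymm (hsf v) (Nat.one_le_iff_ne_zero.2 (Finsupp.mem_support_iff.1 hv))
            rw [h1, pow_one]
          rw [hmon]
          exact Submodule.subset_span ⟨a.support, hface, rfl⟩
        · -- some exponent ≥ 2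
          push_neg at hsf
          obtain ⟨i, hi2⟩ := hsf
          have hi2 : 2 ≤ a i := hi2
          have hisupp : i ∈ a.support := Finsupp.mem_support_iff.2 (by omega)
          obtain ⟨g, hg, c, hc0, hXi⟩ := key_lemma Δ hdown θ hθ hlsop hface hisupp
          set a' : Fin m →₀ ℕ := a - Finsupp.single i 1 with ha'
          have haa' : a = Finsupp.single i 1 + a' := by
            ext j
            simp only [Finsupp.add_apply, Finsupp.tsub_apply, ha', Finsupp.single_apply]
            by_cases hji : i = j
            · subst hji; simp; omega
            · simp [hji]
          have hsupp' : a'.support = a.support := by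
            ext j
            simp only [Finsupp.mem_support_iff, Finsupp.tsub_apply, ha', Finsupp.single_apply]
            by_cases hji : i = j
            · subst hji; simp; omega
            · simp [hji]
          have hmono : (monomial a 1 : MvPolynomial (Fin m) k) = X i * monomial a' 1 := by
            rw [X, monomial_mul, one_mul, ← haa']
          -- rewrite X i
          rw [hmono, hXi, add_mul, hmkadd]
          refine Submodule.add_mem _ ?_ ?_
          · -- g * monomial a' 1 ∈ J
            have : g * monomial a' 1 ∈ J := by
              refine Ideal.mul_mem_right _ _ ?_
              exact (le_sup_right : Ideal.span (Set.range θ) ≤ J) hg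
            rw [Ideal.Quotient.eq_zero_iff_mem.2 this]
            exact Submodule.zero_mem _
          · -- sum term
            rw [Finset.sum_mul, hmksum]
            refine Submodule.sum_mem _ fun j _ => ?_
            rw [smul_mul_assoc, hmksmul]
            by_cases hjσ : j ∈ a.support
            · rw [hc0 j hjσ, zero_smul]
              exact Submodule.zero_mem _
            · refine Submodule.smul_mem _ _ ?_
              have hXj : (X j : MvPolynomial (Fin m) k) * monomial a' 1
                  = monomial (Finsupp.single j 1 + a') 1 := by
                rw [X, monomial_mul, one_mul]
              rw [hXj]
              -- measure decreases
              set b : Fin m →₀ ℕ := Finsupp.single j 1 + a' with hb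
              have hsum_a : (a.sum fun _ n => n) = 1 + (a'.sum fun _ n => n) := by
                conv_lhs => rw [haa']
                rw [Finsupp.sum_add_index' (fun _ => rfl) (fun _ m n => rfl)]
                rw [Finsupp.sum_single_index rfl]
              have hsum_b : (b.sum fun _ n => n) = 1 + (a'.sum fun _ n => n) := by
                rw [hb, Finsupp.sum_add_index' (fun _ => rfl) (fun _ m n => rfl)]
                rw [Finsupp.sum_single_index rfl]
              have hsuppb : b.support = insert j a.support := by
                rw [hb, Finsupp.support_add_eq, Finsupp.support_single_ne_zero j one_ne_zero,
                  hsupp']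
                · ext x; simp [or_comm]
                · rw [Finsupp.support_single_ne_zero j one_ne_zero, hsupp']
                  simp [hjσ]
              have hcardb : b.support.card = a.support.card + 1 := by
                rw [hsuppb, Finset.card_insert_of_notMem hjσ]
              have hstrict : a.support.card < a.sum fun _ n => n := by
                rw [Finsupp.sum]
                calc a.support.card = ∑ _v ∈ a.support, 1 := by simp
                _ < ∑ v ∈ a.support, a v := by
                    refine Finset.sum_lt_sum (fun v hv =>
                      Nat.one_le_iff_ne_zero.2 (Finsupp.mem_support_iff.1 hv)) ⟨i, hisupp, ?_⟩
                    omega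
              refine ih ((b.sum fun _ n => n) - b.support.card) ?_ b rfl
              rw [hsum_b, hcardb, ← ha, ← hsum_a]
              omega
      · -- support not a face: monomial lies in the Stanley–Reisner ideal
        have hmem : (monomial a 1 : MvPolynomial (Fin m) k) ∈ J := by
          have hmon : (monomial a 1 : MvPolynomial (Fin m) k)
              = (∏ v ∈ a.support, X v) * ∏ v ∈ a.support, (X v : MvPolynomial (Fin m) k) ^ (a v - 1) := by
            rw [monomial_eq, C_1, one_mul, Finsupp.prod, ← Finset.prod_mul_distrib]
            refine Finset.prod_congr rfl fun v hv => ?_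
            have h1 : 1 ≤ a v := Nat.one_le_iff_ne_zero.2 (Finsupp.mem_support_iff.1 hv)
            rw [← pow_succ']
            congr 1
            omega
          rw [hmon]
          refine Ideal.mul_mem_right _ _ ?_
          exact (le_sup_left : SRIdeal k Δ ≤ J)
            (Ideal.subset_span ⟨a.support, hface, rfl⟩)
        rw [Ideal.Quotient.eq_zero_iff_mem.2 hmem]
        exact Submodule.zero_mem _
  -- conclude
  rw [Submodule.eq_top_iff']
  intro x
  obtain ⟨p, rfl⟩ := Ideal.Quotient.mk_surjective x
  rw [p.as_sum, hmksum]
  refine Submodule.sum_mem _ fun a haa => ?_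
  have : (monomial a (coeff a p) : MvPolynomial (Fin m) k) = coeff a p • monomial a 1 := by
    rw [smul_monomial, smul_eq_mul, mul_one]
  rw [this, hmksmul]
  exact Submodule.smul_mem _ _ (main _ a rfl)
end

section
/- Let F be a field and k = F(a_{ij}) a purely transcendental extension by variables a_{ij}, 1 ≤ i ≤ d, 1 ≤ j ≤ m, with m ≥ d. Let b_{ij} (1 ≤ i ≤ d, d+1 ≤ j ≤ m) be the entries of the matrix B, where N·(a_{ij}) = (I_d | B) for the unique invertible N ∈ GL(d, k) reducing the first d columns to the identity (assuming the first d×d block of (a_{ij}) is invertible). Then the elements b_{ij} are algebraically independent over F. -/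
open MvPolynomial
set_option maxHeartbeats 1000000
set_option synthInstance.maxHeartbeats 1000000

namespace EntriesOfReducedMatrixAux

variable (F : Type*) [Field F] (d m : ℕ) (hdm : d ≤ m)

abbrev Rr := MvPolynomial (Fin d × Fin m) F
abbrev Kk := FractionRing (Rr F d m)
abbrev Idx := Fin d × {j : Fin m // d ≤ (j : ℕ)}
abbrev Ll := FractionRing (MvPolynomial (Idx d m) F)

noncomputable def aK : Matrix (Fin d) (Fin m) (Kk F d m) :=
  Matrix.of fun i j => algebraMap (Rr F d m) (Kk F d m) (X (i, j))

noncomputable def A0 : Matrix (Fin d) (Fin d) (Kk F d m) :=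
  Matrix.of fun i j => aK F d m i (Fin.castLE hdm j)

noncomputable def M₀ : Matrix (Fin d) (Fin d) (Rr F d m) :=
  Matrix.of fun i j => X (i, Fin.castLE hdm j)

noncomputable def δ : Rr F d m := (M₀ F d m hdm).det

noncomputable def cc (i : Fin d) (j : Fin m) : Rr F d m :=
  ∑ k, (M₀ F d m hdm).adjugate i k * X (k, j)

noncomputable def gg : Fin d × Fin m → Ll F d m := fun p =>
  if h : d ≤ (p.2 : ℕ) then algebraMap (MvPolynomial (Idx d m) F) (Ll F d m) (X (p.1, ⟨p.2, h⟩))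
  else if (p.1 : ℕ) = (p.2 : ℕ) then 1 else 0

noncomputable def φ : Rr F d m →ₐ[F] Ll F d m := aeval (gg F d m)

lemma hA₀map : (M₀ F d m hdm).map (algebraMap (Rr F d m) (Kk F d m)) = A0 F d m hdm := rfl

lemma hdetδ : algebraMap (Rr F d m) (Kk F d m) (δ F d m hdm) = (A0 F d m hdm).det := by
  rw [δ, RingHom.map_det, RingHom.mapMatrix_apply, hA₀map]

lemma hφX (p : Fin d × Fin m) : φ F d m (X p) = gg F d m p := aeval_X (f := gg F d m) p

lemma hφM₀ : (M₀ F d m hdm).map (φ F d m) = 1 := by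
  ext i j
  show φ F d m (X (i, Fin.castLE hdm j)) = (1 : Matrix (Fin d) (Fin d) (Ll F d m)) i j
  have hj : ¬ d ≤ ((Fin.castLE hdm j : Fin m) : ℕ) := by simpa using j.isLt
  rw [hφX, show gg F d m (i, Fin.castLE hdm j)
      = if (i : ℕ) = ((Fin.castLE hdm j : Fin m) : ℕ) then 1 else 0 from dif_neg hj]
  simp [Matrix.one_apply, Fin.ext_iff]

lemma hφδ : φ F d m (δ F d m hdm) = 1 := by
  show (φ F d m : Rr F d m →+* Ll F d m) (M₀ F d m hdm).det = 1
  rw [RingHom.map_det, RingHom.mapMatrix_apply]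
  rw [show ((M₀ F d m hdm).map (φ F d m : Rr F d m →+* Ll F d m)
      : Matrix (Fin d) (Fin d) (Ll F d m)) = (M₀ F d m hdm).map (φ F d m) from rfl,
    hφM₀, Matrix.det_one]

lemma hφadj (i k : Fin d) :
    φ F d m ((M₀ F d m hdm).adjugate i k) = (1 : Matrix (Fin d) (Fin d) (Ll F d m)) i k := by
  have h := RingHom.map_adjugate (φ F d m : Rr F d m →+* Ll F d m) (M₀ F d m hdm)
  rw [RingHom.mapMatrix_apply, RingHom.mapMatrix_apply] at h
  rw [show ((M₀ F d m hdm).map (φ F d m : Rr F d m →+* Ll F d m)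
      : Matrix (Fin d) (Fin d) (Ll F d m)) = (M₀ F d m hdm).map (φ F d m) from rfl,
    hφM₀, Matrix.adjugate_one] at h
  exact congrFun (congrFun h i) k

lemma hφc (p : Idx d m) :
    φ F d m (cc F d m hdm p.1 p.2.1) = algebraMap (MvPolynomial (Idx d m) F) (Ll F d m) (X p) := by
  obtain ⟨i, j, hj⟩ := p
  show φ F d m (∑ k, (M₀ F d m hdm).adjugate i k * X (k, j)) = _
  rw [map_sum]
  have hsum : ∑ k, φ F d m ((M₀ F d m hdm).adjugate i k * X (k, j))
      = ∑ k, (1 : Matrix (Fin d) (Fin d) (Ll F d m)) i k * gg F d m (k, j) :=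
    Finset.sum_congr rfl fun k _ => by rw [map_mul, hφadj, hφX]
  rw [hsum]
  simp only [Matrix.one_apply, ite_mul, one_mul, zero_mul]
  rw [Finset.sum_ite_eq (Finset.univ : Finset (Fin d)) i (fun k => gg F d m (k, j))]
  simp only [Finset.mem_univ, if_true]
  show (if h : d ≤ (j : ℕ)
      then algebraMap (MvPolynomial (Idx d m) F) (Ll F d m) (X (i, ⟨j, h⟩)) else _) = _
  rw [dif_pos hj]

abbrev Rδ := Localization.Away (δ F d m hdm)

noncomputable abbrev α : Rr F d m →+* Rδ F d m hdm := algebraMap _ _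

lemma hKδ (hdet : IsUnit (A0 F d m hdm).det) :
    IsUnit (algebraMap (Rr F d m) (Kk F d m) (δ F d m hdm)) := by
  rw [hdetδ]; exact hdet

lemma hφδunit : IsUnit ((φ F d m : Rr F d m →+* Ll F d m) (δ F d m hdm)) := by
  rw [show (φ F d m : Rr F d m →+* Ll F d m) (δ F d m hdm) = φ F d m (δ F d m hdm) from rfl, hφδ]
  exact isUnit_one

noncomputable abbrev β (hdet : IsUnit (A0 F d m hdm).det) : Rδ F d m hdm →+* Kk F d m :=
  IsLocalization.Away.lift (g := algebraMap (Rr F d m) (Kk F d m)) (δ F d m hdm)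
    (hKδ F d m hdm hdet)

noncomputable abbrev χ : Rδ F d m hdm →+* Ll F d m :=
  IsLocalization.Away.lift (g := (φ F d m : Rr F d m →+* Ll F d m)) (δ F d m hdm)
    (hφδunit F d m hdm)

lemma hβα (hdet : IsUnit (A0 F d m hdm).det) (r : Rr F d m) :
    β F d m hdm hdet (α F d m hdm r) = algebraMap (Rr F d m) (Kk F d m) r :=
  IsLocalization.Away.lift_eq _ _ r

lemma hχα (r : Rr F d m) : χ F d m hdm (α F d m hdm r) = φ F d m r :=
  IsLocalization.Away.lift_eq _ _ r

lemma hβinj (hdet : IsUnit (A0 F d m hdm).det) : Function.Injective (β F d m hdm hdet) := by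
  rw [injective_iff_map_eq_zero]
  intro z hz
  obtain ⟨⟨r, s⟩, hrs⟩ := IsLocalization.surj (M := Submonoid.powers (δ F d m hdm)) z
  have hr : algebraMap (Rr F d m) (Kk F d m) r = 0 := by
    have h := congrArg (β F d m hdm hdet) hrs
    rw [map_mul, hz, zero_mul] at h
    rw [show (algebraMap (Rr F d m) (Rδ F d m hdm)) (r, s).1 = α F d m hdm r from rfl] at h
    rw [hβα] at h
    exact h.symm
  have hr0 : r = 0 := IsFractionRing.injective (Rr F d m) (Kk F d m) (by rw [hr, map_zero])
  rw [hr0, map_zero] at hrs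
  exact ((IsLocalization.map_units (Rδ F d m hdm) s).mul_left_eq_zero).mp hrs

noncomputable abbrev invδ : Rδ F d m hdm := IsLocalization.Away.invSelf (δ F d m hdm)

lemma hmulinv : α F d m hdm (δ F d m hdm) * invδ F d m hdm = 1 :=
  IsLocalization.Away.mul_invSelf (δ F d m hdm)

noncomputable abbrev bb : Idx d m → Rδ F d m hdm := fun p =>
  α F d m hdm (cc F d m hdm p.1 p.2.1) * invδ F d m hdm

lemma hχbb (p : Idx d m) :
    χ F d m hdm (bb F d m hdm p)
      = algebraMap (MvPolynomial (Idx d m) F) (Ll F d m) (X p) := by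
  have h1 : χ F d m hdm (invδ F d m hdm) = 1 := by
    have h2 := congrArg (χ F d m hdm) (hmulinv F d m hdm)
    rwa [map_mul, map_one, hχα, hφδ, one_mul] at h2
  show χ F d m hdm (α F d m hdm (cc F d m hdm p.1 p.2.1) * invδ F d m hdm) = _
  rw [map_mul, hχα, h1, mul_one, hφc]

lemma hβbb (hdet : IsUnit (A0 F d m hdm).det) (p : Idx d m) :
    β F d m hdm hdet (bb F d m hdm p) = ((A0 F d m hdm)⁻¹ * aK F d m) p.1 p.2.1 := by
  obtain ⟨i, j, hj⟩ := p
  show β F d m hdm hdet (α F d m hdm (cc F d m hdm i j) * invδ F d m hdm)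
      = ((A0 F d m hdm)⁻¹ * aK F d m) i j
  have hβi : β F d m hdm hdet (invδ F d m hdm) = ((A0 F d m hdm).det)⁻¹ := by
    have h := congrArg (β F d m hdm hdet) (hmulinv F d m hdm)
    rw [map_mul, map_one, hβα, hdetδ] at h
    rw [mul_comm] at h
    exact eq_inv_of_mul_eq_one_left h
  have hmapc : algebraMap (Rr F d m) (Kk F d m) (cc F d m hdm i j)
      = ∑ k, (A0 F d m hdm).adjugate i k * aK F d m k j := by
    show algebraMap (Rr F d m) (Kk F d m) (∑ k, (M₀ F d m hdm).adjugate i k * X (k, j)) = _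
    rw [map_sum]
    refine Finset.sum_congr rfl fun k _ => ?_
    rw [map_mul]
    congr 1
    have h := RingHom.map_adjugate (algebraMap (Rr F d m) (Kk F d m)) (M₀ F d m hdm)
    rw [RingHom.mapMatrix_apply, RingHom.mapMatrix_apply, hA₀map] at h
    exact congrFun (congrFun h i) k
  rw [map_mul, hβα, hβi, hmapc, Matrix.mul_apply, Matrix.inv_def]
  rw [Finset.sum_mul]
  refine Finset.sum_congr rfl fun k _ => ?_
  rw [Matrix.smul_apply, smul_eq_mul, Ring.inverse_eq_inv]
  ring

lemma hcompK (hdet : IsUnit (A0 F d m hdm).det) :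
    (β F d m hdm hdet).comp ((α F d m hdm).comp (algebraMap F (Rr F d m)))
      = algebraMap F (Kk F d m) := by
  rw [← RingHom.comp_assoc]
  rw [show (β F d m hdm hdet).comp (α F d m hdm) = algebraMap (Rr F d m) (Kk F d m)
    from IsLocalization.Away.lift_comp (δ F d m hdm) (hKδ F d m hdm hdet)]
  exact (IsScalarTower.algebraMap_eq F (Rr F d m) (Kk F d m)).symm

lemma hcompL :
    (χ F d m hdm).comp ((α F d m hdm).comp (algebraMap F (Rr F d m)))
      = algebraMap F (Ll F d m) := by
  rw [← RingHom.comp_assoc]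
  rw [show (χ F d m hdm).comp (α F d m hdm) = (φ F d m : Rr F d m →+* Ll F d m)
    from IsLocalization.Away.lift_comp (δ F d m hdm) (hφδunit F d m hdm)]
  exact (φ F d m).comp_algebraMap

theorem main (hdet : IsUnit (A0 F d m hdm).det) :
    AlgebraicIndependent F
      (fun p : Idx d m => ((A0 F d m hdm)⁻¹ * aK F d m) p.1 p.2.1) := by
  rw [show (fun p : Idx d m => ((A0 F d m hdm)⁻¹ * aK F d m) p.1 p.2.1)
      = fun p => β F d m hdm hdet (bb F d m hdm p)
    from funext fun p => (hβbb F d m hdm hdet p).symm]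
  rw [algebraicIndependent_iff_injective_aeval, injective_iff_map_eq_zero]
  intro p hp
  set q : Rδ F d m hdm :=
    eval₂ ((α F d m hdm).comp (algebraMap F (Rr F d m))) (bb F d m hdm) p with hqdef
  have hβq : β F d m hdm hdet q = 0 := by
    have h := eval₂_comp_left (β F d m hdm hdet)
      ((α F d m hdm).comp (algebraMap F (Rr F d m))) (bb F d m hdm) p
    rw [hcompK] at h
    have h2 : eval₂ (algebraMap F (Kk F d m)) (⇑(β F d m hdm hdet) ∘ bb F d m hdm) p
        = aeval (fun p => β F d m hdm hdet (bb F d m hdm p)) p := by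
      rw [aeval_def]; rfl
    rw [h2, hp] at h
    exact h
  have hq : q = 0 := hβinj F d m hdm hdet (by rw [hβq, map_zero])
  have hχq : χ F d m hdm q = algebraMap (MvPolynomial (Idx d m) F) (Ll F d m) p := by
    have h := eval₂_comp_left (χ F d m hdm)
      ((α F d m hdm).comp (algebraMap F (Rr F d m))) (bb F d m hdm) p
    rw [hcompL] at h
    have h2 : ⇑(χ F d m hdm) ∘ bb F d m hdm
        = ⇑(algebraMap (MvPolynomial (Idx d m) F) (Ll F d m)) ∘ X :=
      funext fun p => hχbb F d m hdm p
    rw [h2] at h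
    have h3 := eval₂_comp_left (algebraMap (MvPolynomial (Idx d m) F) (Ll F d m))
      (C : F →+* MvPolynomial (Idx d m) F) X p
    rw [eval₂_eta] at h3
    have h4 : (algebraMap (MvPolynomial (Idx d m) F) (Ll F d m)).comp
        (C : F →+* MvPolynomial (Idx d m) F) = algebraMap F (Ll F d m) := by
      rw [show (C : F →+* MvPolynomial (Idx d m) F) = algebraMap F (MvPolynomial (Idx d m) F)
        from rfl]
      exact (IsScalarTower.algebraMap_eq F (MvPolynomial (Idx d m) F) (Ll F d m)).symm
    rw [h4] at h3
    exact h.trans h3.symm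
  rw [hq, map_zero] at hχq
  exact IsFractionRing.injective (MvPolynomial (Idx d m) F) (Ll F d m) (by rw [← hχq, map_zero])

end EntriesOfReducedMatrixAux

/-- Let `(a_{ij})` be the `d × m` matrix of transcendental variables over `F`, viewed in
`K = F(a_{ij})`, let `A₀` be its (generically invertible) first `d × d` block and
`B = A₀⁻¹ · (a_{ij})`. Then the entries `b_{ij}` of `B` with `d + 1 ≤ j ≤ m` are
algebraically independent over `F`. -/
theorem entries_of_reduced_matrix_algebraicIndependent {F : Type*} [Field F]
    (d m : ℕ) (hdm : d ≤ m)
    (a : Matrix (Fin d) (Fin m) (FractionRing (MvPolynomial (Fin d × Fin m) F)))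
    (ha : a = Matrix.of fun i j =>
      algebraMap (MvPolynomial (Fin d × Fin m) F) _ (X (i, j)))
    (A₀ : Matrix (Fin d) (Fin d) (FractionRing (MvPolynomial (Fin d × Fin m) F)))
    (hA₀ : A₀ = Matrix.of fun i j => a i (Fin.castLE hdm j))
    (hdet : IsUnit A₀.det) :
    AlgebraicIndependent F
      (fun p : Fin d × {j : Fin m // d ≤ (j : ℕ)} => (A₀⁻¹ * a) p.1 p.2.1) := by
  subst hA₀ ha
  exact EntriesOfReducedMatrixAux.main F d m hdm hdet
end
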